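/- There exists a matching instance admitting an iEF lottery but admitting no min-max-share (mMS) allocation. Specifically, for the instance with valuations v_1 = (1/3, 2/3, 0), v_2 = (0, 1/2, 1/2), v_3 = (0, 1/2, 1/2) over items (a,b,c), the min-max shares are τ_1 = 2/3, τ_2 = 1/2, τ_3 = 1/2, and no matching gives every agent i value at least τ_i, while the lottery over matchings (a,b,c) and (a,c,b) with probability 1/2 each is iEF. -/

import Mathlib

open Finset

/-- Probability that agent `i` receives item `j` under a lottery `x` over matchings. -/
def prMatch {n : ℕ} (x : Equiv.Perm (Fin n) → ℝ) (i j : Fin n) : ℝ :=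
  ∑ b ∈ Finset.univ.filter (fun b : Equiv.Perm (Fin n) => b i = j), x b

/-- Interim envy-freeness of a lottery over matchings: for all agents `i ≠ k` and every
item `j` received by `i` with positive probability, `v_i(j) ≥ E[v_i(b(k)) | b(i) = j]`
(stated multiplied through by the positive probability `Pr[b(i) = j]`). -/
def MIEF {n : ℕ} (v : Fin n → Fin n → ℝ) (x : Equiv.Perm (Fin n) → ℝ) : Prop :=
  ∀ i k : Fin n, i ≠ k → ∀ j : Fin n, 0 < prMatch x i j →
    (∑ b ∈ Finset.univ.filter (fun b : Equiv.Perm (Fin n) => b i = j), x b * v i (b k))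
      ≤ v i j * prMatch x i j
/-- Value of agent `i` for a bundle `S` of items (additive valuations). -/
def bundleVal {n m : ℕ} (v : Fin n → Fin m → ℝ) (i : Fin n) (S : Finset (Fin m)) : ℝ :=
  ∑ j ∈ S, v i j

/-- An allocation is a partition of the items into bundles, one per agent. -/
def IsPartition {n m : ℕ} (a : Fin n → Finset (Fin m)) : Prop :=
  (∀ i k : Fin n, i ≠ k → Disjoint (a i) (a k)) ∧ ∀ j : Fin m, ∃ i, j ∈ a i

/-- Valuations of the instance: items (a,b,c) = (0,1,2). -/
noncomputable def v7 : Fin 3 → Fin 3 → ℝ :=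
  ![![1/3, 2/3, 0], ![0, 1/2, 1/2], ![0, 1/2, 1/2]]

/-- The claimed min-max shares τ. -/
noncomputable def tau7 : Fin 3 → ℝ := ![2/3, 1/2, 1/2]

/-- The lottery returning matchings (a,b,c) and (a,c,b) with probability 1/2 each. -/
noncomputable def lot7 : Equiv.Perm (Fin 3) → ℝ := fun b =>
  if b = Equiv.refl (Fin 3) ∨ b = Equiv.swap 1 2 then 1/2 else 0

/-!
Each `τ_i` is agent `i`'s value for item `b`, her largest single-item value: the allocation
into singletons attains it, and in any allocation the bundle containing `b` reaches it. Item
`a` is worth less than `τ_i` to every agent, so whoever receives it in a matching falls short.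
In the lottery agent 1 (index `0`) always gets `a` and envies agent `k` only in the matching giving `k`
item `b`, which has probability `1/2`, so her conditional expectation is exactly
`1/2 · 2/3 = 1/3 = v₁(a)`; agents 2 and 3 always get an item of their maximal value `1/2`.
-/

def IsMinMaxShare {n m : ℕ} (v : Fin n → Fin m → ℝ) (i : Fin n) (τ : ℝ) : Prop :=
  (∃ A : Fin n → Finset (Fin m), IsPartition A ∧ ∀ j, bundleVal v i (A j) ≤ τ) ∧
    ∀ A : Fin n → Finset (Fin m), IsPartition A → ∃ j, τ ≤ bundleVal v i (A j)

theorem isPartition_singleton {n : ℕ} : IsPartition (fun j : Fin n => ({j} : Finset (Fin n))) :=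
  ⟨fun _ _ h => Finset.disjoint_singleton.2 h, fun j => ⟨j, Finset.mem_singleton_self j⟩⟩

theorem le_bundleVal_of_mem {n m : ℕ} {v : Fin n → Fin m → ℝ} {i : Fin n}
    (hv : ∀ j, 0 ≤ v i j) {S : Finset (Fin m)} {j : Fin m} (hj : j ∈ S) :
    v i j ≤ bundleVal v i S :=
  Finset.single_le_sum (fun j _ => hv j) hj

theorem exists_le_bundleVal_of_isPartition {n m : ℕ} {v : Fin n → Fin m → ℝ} {i : Fin n}
    (hv : ∀ j, 0 ≤ v i j) {A : Fin n → Finset (Fin m)} (hA : IsPartition A) (j : Fin m) :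
    ∃ k, v i j ≤ bundleVal v i (A k) :=
  (hA.2 j).imp fun _ hk => le_bundleVal_of_mem hv hk

theorem isMinMaxShare_of_isGreatest {n : ℕ} {v : Fin n → Fin n → ℝ} {i : Fin n} {τ : ℝ}
    (hv : ∀ j, 0 ≤ v i j) (hτ : IsGreatest (Set.range (v i)) τ) : IsMinMaxShare v i τ := by
  obtain ⟨⟨j₀, rfl⟩, hmax⟩ := hτ
  refine ⟨⟨_, isPartition_singleton, fun j => ?_⟩, fun A hA =>
    exists_le_bundleVal_of_isPartition hv hA j₀⟩
  simpa [bundleVal] using hmax (Set.mem_range_self j)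

theorem exists_apply_lt_of_forall_lt {n : ℕ} {v : Fin n → Fin n → ℝ} {τ : Fin n → ℝ}
    {j : Fin n} (hj : ∀ i, v i j < τ i) (b : Equiv.Perm (Fin n)) : ∃ i, v i (b i) < τ i :=
  ⟨b.symm j, by simpa using hj (b.symm j)⟩

theorem sum_lot7_mul (s : Finset (Equiv.Perm (Fin 3))) (g : Equiv.Perm (Fin 3) → ℝ) :
    ∑ b ∈ s, lot7 b * g b =
      (if Equiv.refl (Fin 3) ∈ s then g (Equiv.refl (Fin 3)) / 2 else 0) +
        if Equiv.swap 1 2 ∈ s then g (Equiv.swap 1 2) / 2 else 0 := by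
  have hsplit : ∀ b, lot7 b * g b =
      (if b = Equiv.refl (Fin 3) then g (Equiv.refl (Fin 3)) / 2 else 0) +
        if b = Equiv.swap 1 2 then g (Equiv.swap 1 2) / 2 else 0 := by
    intro b
    by_cases h₁ : b = Equiv.refl (Fin 3) <;> by_cases h₂ : b = Equiv.swap 1 2 <;>
      simp_all [lot7, div_eq_inv_mul]
  simp only [hsplit, Finset.sum_add_distrib, Finset.sum_ite_eq']

theorem sum_lot7 (s : Finset (Equiv.Perm (Fin 3))) :
    ∑ b ∈ s, lot7 b =
      (if Equiv.refl (Fin 3) ∈ s then 1 / 2 else 0) + if Equiv.swap 1 2 ∈ s then 1 / 2 else 0 := by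
  simpa using sum_lot7_mul s 1

theorem v7_nonneg (i j : Fin 3) : 0 ≤ v7 i j := by
  fin_cases i <;> fin_cases j <;> norm_num [v7]

theorem isGreatest_range_v7 (i : Fin 3) : IsGreatest (Set.range (v7 i)) (tau7 i) :=
  ⟨⟨1, by fin_cases i <;> norm_num [v7, tau7]⟩, by
    rintro _ ⟨j, rfl⟩
    fin_cases i <;> fin_cases j <;> norm_num [v7, tau7]⟩

theorem v7_apply_zero_lt_tau7 (i : Fin 3) : v7 i 0 < tau7 i := by
  fin_cases i <;> norm_num [v7, tau7]

theorem mief_lot7 : MIEF v7 lot7 := by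
  intro i k hik j hj
  simp only [prMatch, sum_lot7_mul, sum_lot7, mem_filter, mem_univ, true_and] at hj ⊢
  fin_cases i <;> fin_cases k <;> fin_cases j <;> simp_all [Equiv.swap_apply_def] <;>
    norm_num [v7, Matrix.cons_val_two]

/-- in this instance the min-max shares are (2/3, 1/2, 1/2) — i.e. τ_i is
simultaneously achievable as a max over bundles of some allocation and is a lower bound
on the max over bundles of every allocation — no matching gives every agent her min-max
share, yet the lottery over (a,b,c) and (a,c,b) is interim envy-free. -/
theorem iEF_without_mMS :
    (∀ i : Fin 3,
      (∃ A : Fin 3 → Finset (Fin 3), IsPartition A ∧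
        ∀ j : Fin 3, bundleVal v7 i (A j) ≤ tau7 i) ∧
      (∀ A : Fin 3 → Finset (Fin 3), IsPartition A →
        ∃ j : Fin 3, tau7 i ≤ bundleVal v7 i (A j))) ∧
    (∀ b : Equiv.Perm (Fin 3), ∃ i : Fin 3, v7 i (b i) < tau7 i) ∧
    (∀ b, 0 ≤ lot7 b) ∧ (∑ b, lot7 b = 1) ∧ MIEF v7 lot7 := by
  refine ⟨fun i => isMinMaxShare_of_isGreatest (v7_nonneg i) (isGreatest_range_v7 i),
    exists_apply_lt_of_forall_lt v7_apply_zero_lt_tau7, fun b => ?_, ?_, mief_lot7⟩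
  · unfold lot7; split_ifs <;> norm_num
  · norm_num [sum_lot7]
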